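/- Define ska(π) as the number of indices i ∈ {1,...,n} such that d_i > max(d_1,...,d_{i-1}, 0), where d_i = i - j_i in the Fisher–Yates encoding of π (i.e., the number of strict left-to-right records exceeding 0 in the sequence d). Then ska(id) = 0, ska(π_1) = n - 1 for the n-cycle π_1 = 2 3 ... n 1, and ska(π_0) = ⌈(n-1)/2⌉ for the reversal π_0(i) = n+1-i. -/

import Mathlib

/-- The Fisher–Yates map: a sequence `j` with `j i ≤ i` maps to the product of
transpositions `(1 j_1)(2 j_2)⋯(n j_n)` applied left to right. -/
def FY (n : ℕ) (j : ∀ i : Fin n, Fin (i.val + 1)) : Equiv.Perm (Fin n) :=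
  (List.ofFn fun i : Fin n => Equiv.swap i (Fin.castLE i.isLt (j i))).reverse.prod

/-- The Fisher–Yates encoding of a permutation: the (unique) preimage under `FY`. -/
noncomputable def FYcode (n : ℕ) (π : Equiv.Perm (Fin n)) : ∀ i : Fin n, Fin (i.val + 1) :=
  Function.invFun (FY n) π

/-- The statistic `stat π = ∑ i (i - j_i)` in the Fisher–Yates encoding. -/
noncomputable def statFY (n : ℕ) (π : Equiv.Perm (Fin n)) : ℕ :=
  ∑ i : Fin n, (i.val - (FYcode n π i).val)

/-- Skandera's Eulerian partner: the number of strict left-to-right records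
exceeding 0 in the sequence `d_i = i - j_i` of the Fisher–Yates encoding. -/
noncomputable def skaFY (n : ℕ) (π : Equiv.Perm (Fin n)) : ℕ :=
  {i : Fin n | 0 < i.val - (FYcode n π i).val ∧
    ∀ k : Fin n, k < i →
      k.val - (FYcode n π k).val < i.val - (FYcode n π i).val}.ncard

/-!
`FY n j` is `s_{n-1} ⋯ s_0` with `s_m = (m j_m)`. The first `m` transpositions fix every point
`≥ m`, so the `m`-th one sends `m` to `j_m`: peeling the transpositions off from the left recovers
the code, hence `FY` is injective and `FYcode` inverts it. The three permutations have the codes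
`j_i = i`, `j_i = 0`, and `j_i = i` for `2i < n`, `j_i = n - 1 - i` otherwise (positions counted
from `0`). The gaps `d_i = i - j_i` are therefore `0`, `i`, and `0` for `i < ⌈n/2⌉` followed by
the strictly increasing positive run `2i - (n - 1)`; in each case the records are exactly the
positions from some threshold `c` on, and there are `n - c` of them.
-/

open Equiv Function

section PrefixProd

variable {M : Type*} [Monoid M]

def prefixProd (f : ℕ → M) : ℕ → M
  | 0 => 1
  | m + 1 => f m * prefixProd f m

theorem prod_reverse_ofFn_eq_prefixProd (f : ℕ → M) (m : ℕ) :
    (List.ofFn fun i : Fin m => f i).reverse.prod = prefixProd f m := by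
  induction m with
  | zero => rfl
  | succ m ih => rw [List.ofFn_succ', prefixProd, ← ih]; simp

end PrefixProd

namespace FisherYates

variable {n : ℕ}

def swapSeq (j : ∀ i : Fin n, Fin (i.val + 1)) (m : ℕ) : Perm (Fin n) :=
  if h : m < n then swap ⟨m, h⟩ (Fin.castLE h (j ⟨m, h⟩)) else 1

theorem FY_eq_prefixProd (j : ∀ i : Fin n, Fin (i.val + 1)) :
    FY n j = prefixProd (swapSeq j) n := by
  rw [FY, ← prod_reverse_ofFn_eq_prefixProd]
  simp [swapSeq]

theorem swapSeq_apply_of_lt (j : ∀ i : Fin n, Fin (i.val + 1)) {m : ℕ} {x : Fin n}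
    (hx : m < x.val) : swapSeq j m x = x := by
  unfold swapSeq
  split_ifs with h
  · have := (j ⟨m, h⟩).isLt
    exact swap_apply_of_ne_of_ne (by grind) (by grind)
  · rfl

theorem prefixProd_swapSeq_apply_of_le (j : ∀ i : Fin n, Fin (i.val + 1)) {m : ℕ}
    {x : Fin n} (hx : m ≤ x.val) : prefixProd (swapSeq j) m x = x := by
  induction m with
  | zero => rfl
  | succ m ih =>
    rw [prefixProd, Perm.mul_apply, ih (by omega), swapSeq_apply_of_lt j (by omega)]

theorem prefixProd_swapSeq_succ_apply_self (j : ∀ i : Fin n, Fin (i.val + 1)) {m : ℕ}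
    (hm : m < n) : prefixProd (swapSeq j) (m + 1) ⟨m, hm⟩ = Fin.castLE hm (j ⟨m, hm⟩) := by
  rw [prefixProd, Perm.mul_apply, prefixProd_swapSeq_apply_of_le j (x := ⟨m, hm⟩) le_rfl,
    swapSeq, dif_pos hm, swap_apply_left]

theorem eq_of_prefixProd_swapSeq_eq {j j' : ∀ i : Fin n, Fin (i.val + 1)} {m : ℕ}
    (h : prefixProd (swapSeq j) m = prefixProd (swapSeq j') m) (i : Fin n) (hi : i.val < m) :
    j i = j' i := by
  induction m with
  | zero => omega
  | succ m ih =>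
    have hcode : ∀ hm : m < n, j ⟨m, hm⟩ = j' ⟨m, hm⟩ := fun hm =>
      Fin.castLE_injective _ <| by
        rw [← prefixProd_swapSeq_succ_apply_self j hm, h, prefixProd_swapSeq_succ_apply_self]
    have hswap : swapSeq j m = swapSeq j' m := by
      unfold swapSeq
      split_ifs with hm
      · rw [hcode hm]
      · rfl
    rcases Nat.lt_succ_iff_lt_or_eq.mp hi with hi | rfl
    · refine ih ?_ hi
      simpa only [prefixProd, hswap, mul_right_inj] using h
    · exact hcode i.isLt

theorem FY_injective : Injective (FY n) := fun j j' h =>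
  funext fun i => eq_of_prefixProd_swapSeq_eq (by rwa [← FY_eq_prefixProd, ← FY_eq_prefixProd])
    i i.isLt

theorem FYcode_FY (j : ∀ i : Fin n, Fin (i.val + 1)) : FYcode n (FY n j) = j :=
  leftInverse_invFun FY_injective j

theorem ncard_setOf_le_val (c : ℕ) : {i : Fin n | c ≤ i.val}.ncard = n - c := by
  have hsplit :=
    Finset.card_filter_add_card_filter_not (s := Finset.univ) (fun i : Fin n => i.val < c)
  rw [Fin.card_filter_val_lt, Finset.card_univ, Fintype.card_fin] at hsplit
  simp only [not_lt] at hsplit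
  rw [Set.ncard_eq_toFinset_card', Set.toFinset_ofPred]
  omega

theorem ncard_records_eq_sub (d : Fin n → ℕ) (c : ℕ) (hpos : ∀ i, 0 < d i ↔ c ≤ i.val)
    (hmono : ∀ k i : Fin n, c ≤ k.val → k < i → d k < d i) :
    {i : Fin n | 0 < d i ∧ ∀ k, k < i → d k < d i}.ncard = n - c := by
  suffices {i : Fin n | 0 < d i ∧ ∀ k, k < i → d k < d i} = {i | c ≤ i.val} by
    rw [this, ncard_setOf_le_val]
  ext i
  refine ⟨fun h => (hpos i).mp h.1, fun hi => ⟨(hpos i).mpr hi, fun k hki => ?_⟩⟩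
  by_cases hk : c ≤ k.val
  · exact hmono k i hk hki
  · rw [Nat.eq_zero_of_not_pos (mt (hpos k).mp hk)]
    exact (hpos i).mpr hi

theorem skaFY_FY_eq_sub (j : ∀ i : Fin n, Fin (i.val + 1)) (c : ℕ)
    (hpos : ∀ i : Fin n, 0 < i.val - (j i).val ↔ c ≤ i.val)
    (hmono : ∀ k i : Fin n, c ≤ k.val → k < i → k.val - (j k).val < i.val - (j i).val) :
    skaFY n (FY n j) = n - c := by
  rw [skaFY, FYcode_FY]
  exact ncard_records_eq_sub (fun i => i.val - (j i).val) c hpos hmono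

theorem swap_apply_val (a b y : Fin n) :
    (swap a b y).val = if y.val = a.val then b.val else if y.val = b.val then a.val else y.val := by
  simp only [swap_apply_def, Fin.ext_iff]
  split_ifs <;> rfl

def idCode (i : Fin n) : Fin (i.val + 1) := Fin.last i

def rotCode (i : Fin n) : Fin (i.val + 1) := 0

def revCode (i : Fin n) : Fin (i.val + 1) :=
  if h : 2 * i.val < n then Fin.last i else ⟨n - 1 - i.val, by omega⟩

theorem revCode_val (i : Fin n) :
    (revCode i).val = if 2 * i.val < n then i.val else n - 1 - i.val := by
  unfold revCode
  split_ifs <;> rfl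

theorem FY_idCode : FY n idCode = 1 :=
  List.prod_eq_one <| by simp [idCode, Fin.ext_iff]

theorem prefixProd_rotCode_apply_val {m : ℕ} (hm : m ≤ n) (x : Fin n) :
    (prefixProd (swapSeq rotCode) m x).val =
      if x.val + 1 < m then x.val + 1 else if x.val + 1 = m then 0 else x.val := by
  induction m with
  | zero => simp [prefixProd]
  | succ m ih =>
    have hmn : m < n := by omega
    rw [prefixProd, Perm.mul_apply, swapSeq, dif_pos hmn, swap_apply_val, ih hmn.le]
    simp only [rotCode, Fin.val_zero, Fin.val_castLE]
    grind

theorem prefixProd_revCode_apply_val {m : ℕ} (hm : m ≤ n) (x : Fin n) :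
    (prefixProd (swapSeq revCode) m x).val =
      if n ≤ x.val + m ∧ x.val < m then n - 1 - x.val else x.val := by
  induction m with
  | zero => simp [prefixProd]
  | succ m ih =>
    have hmn : m < n := by omega
    have hx := x.isLt
    rw [prefixProd, Perm.mul_apply, swapSeq, dif_pos hmn, swap_apply_val, ih hmn.le]
    simp only [Fin.val_castLE, revCode_val]
    split_ifs <;> omega

theorem FY_rotCode : FY n rotCode = finRotate n := by
  cases n with
  | zero => exact Subsingleton.elim _ _
  | succ n =>
    ext x
    rw [FY_eq_prefixProd, prefixProd_rotCode_apply_val le_rfl, coe_finRotate]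
    grind

theorem FY_revCode : FY n revCode = Fin.revPerm := by
  ext x
  rw [FY_eq_prefixProd, prefixProd_revCode_apply_val le_rfl, Fin.revPerm_apply, Fin.val_rev]
  split_ifs <;> omega

end FisherYates

open FisherYates in
/-- `ska(id) = 0`, `ska(π₁) = n - 1` for the n-cycle
`π₁ = 2 3 … n 1`, and `ska(π₀) = ⌈(n-1)/2⌉` for the reversal `π₀`. -/
theorem skaFY_values (n : ℕ) :
    skaFY n 1 = 0 ∧
    skaFY n (finRotate n) = n - 1 ∧
    skaFY n (Fin.revPerm : Equiv.Perm (Fin n)) = (n - 1 + 1) / 2 := by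
  refine ⟨?_, ?_, ?_⟩
  · rw [← FY_idCode, skaFY_FY_eq_sub idCode n, Nat.sub_self]
    · simp [idCode]
    · simp [idCode]
  · rw [← FY_rotCode, skaFY_FY_eq_sub rotCode 1]
    · intro i
      simp only [rotCode, Fin.val_zero, Nat.sub_zero]
      omega
    · intro k i _ hki
      simpa [rotCode] using hki
  · rw [← FY_revCode, skaFY_FY_eq_sub revCode ((n + 1) / 2)]
    · omega
    · intro i
      rw [revCode_val]
      split_ifs <;> omega
    · intro k i hk hki
      rw [Fin.lt_def] at hki
      rw [revCode_val, revCode_val]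
      split_ifs <;> omega
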